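/- arXiv:2006.02494 — 6 statements merged into one kernel-verified Lean document; each statement's English description precedes it below -/
import Mathlib

section
/- Existence of a Bhargava cube for a pair of quadratic forms: Let A₁,B₁,C₁,A₂,B₂,C₂ be integers with B₁² − 4A₁C₁ = B₂² − 4A₂C₂. Then there exists a 2×4 integer matrix M with rows (p₁,p₂,p₃,p₄) and (r₁,r₂,r₃,r₄) whose 2×2 minors M_{ij} = p_i r_j − p_j r_i satisfy: M₁₂ = −A₁, M₁₃ = −A₂, M₁₄ = −(B₁+B₂)/2, M₂₃ = (B₁−B₂)/2, M₂₄ = −C₂, M₃₄ = −C₁. (No primitivity or coprimality assumption on the two forms is needed.) -/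
/-!
With `m₁₂ = -A₁, m₁₃ = -A₂, m₁₄ = -(B₁ + B₂)/2, m₂₃ = (B₁ - B₂)/2, m₂₄ = -C₂, m₃₄ = -C₁`, equality
of the discriminants is exactly the Plücker relation `m₁₂ m₃₄ - m₁₃ m₂₄ + m₁₄ m₂₃ = 0`, and over a
Bezout domain every such bivector of `R⁴` is decomposable, i.e. is `p ∧ r`. Writing `p = (s, P)` and
`r = (t, Q)`, this asks for `s • Q - t • P = (m₁₂, m₁₃, m₁₄)` and `P ⨯₃ Q = (m₃₄, -m₂₄, m₂₃)`.
If the first vector is `g • a'` with `a'` unimodular, take `P = a'`; the second vector `b` is then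
orthogonal to `a'`, and `a' ⨯₃ (b ⨯₃ x) = b` as soon as `a' ⬝ᵥ x = 1`.
-/

open Matrix

theorem cross_cross_eq_of_dotProduct_eq_one {R : Type*} [CommRing R] {p u x : Fin 3 → R}
    (hx : p ⬝ᵥ x = 1) (hu : u ⬝ᵥ p = 0) : p ⨯₃ (u ⨯₃ x) = u := by
  rw [cross_cross_eq_smul_sub_smul', hx, hu, one_smul, zero_smul, sub_zero]

section BezoutDomain

variable {R : Type*} [CommRing R] [IsDomain R] [IsBezout R]

theorem exists_eq_smul_and_dotProduct_eq_one {ι : Type*} [Fintype ι] {a : ι → R} (ha : a ≠ 0) :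
    ∃ (g : R) (a' x : ι → R), g ≠ 0 ∧ a = g • a' ∧ x ⬝ᵥ a' = 1 := by
  obtain ⟨g, hg⟩ := IsBezout.isPrincipal_of_FG _ (Submodule.fg_span (Set.finite_range a))
  have hdvd (i : ι) : ∃ c, a i = g * c := by
    have : a i ∈ Submodule.span R {g} := hg ▸ Submodule.subset_span (Set.mem_range_self i)
    obtain ⟨c, hc⟩ := Ideal.mem_span_singleton'.mp this
    exact ⟨c, by rw [← hc, mul_comm]⟩
  choose a' ha' using hdvd
  obtain ⟨x, hx⟩ := (Submodule.mem_span_range_iff_exists_fun R).mp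
    (hg ▸ Submodule.mem_span_singleton_self g : g ∈ Submodule.span R (Set.range a))
  have hg0 : g ≠ 0 := by
    rintro rfl
    exact ha (funext fun i => by simp [ha'])
  refine ⟨g, a', x, hg0, funext ha', mul_left_cancel₀ hg0 ?_⟩
  calc g * (x ⬝ᵥ a') = ∑ i, x i • a i := by
        simp only [dotProduct, Finset.mul_sum, ha', smul_eq_mul, mul_left_comm]
    _ = g * 1 := by rw [hx, mul_one]

theorem exists_cross_eq (u : Fin 3 → R) : ∃ v w : Fin 3 → R, v ⨯₃ w = u := by
  by_cases hu : u 0 = 0 ∧ u 1 = 0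
  · refine ⟨![1, 0, 0], ![0, u 2, 0], ?_⟩
    ext i; fin_cases i <;> simp [cross_apply, hu.1, hu.2]
  · have hne : ![u 1, -u 0, 0] ≠ 0 := fun h =>
      hu ⟨by simpa using congrFun h 1, by simpa using congrFun h 0⟩
    obtain ⟨g, p, x, hg0, hp, hx⟩ := exists_eq_smul_and_dotProduct_eq_one hne
    have hup : u ⬝ᵥ p = 0 := by
      refine (mul_eq_zero.mp ?_).resolve_left hg0
      rw [← smul_eq_mul, ← dotProduct_smul, ← hp, vec3_dotProduct]
      simp only [cons_val]
      ring
    exact ⟨p, u ⨯₃ x, cross_cross_eq_of_dotProduct_eq_one (by rwa [dotProduct_comm]) hup⟩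

theorem exists_smul_sub_smul_and_cross_eq {a b : Fin 3 → R} (h : a ⬝ᵥ b = 0) :
    ∃ (s t : R) (P Q : Fin 3 → R), s • Q - t • P = a ∧ P ⨯₃ Q = b := by
  by_cases ha : a = 0
  · obtain ⟨P, Q, hPQ⟩ := exists_cross_eq b
    exact ⟨0, 0, P, Q, by simp [ha], hPQ⟩
  · obtain ⟨g, a', x, hg0, rfl, hx⟩ := exists_eq_smul_and_dotProduct_eq_one ha
    have hb : b ⬝ᵥ a' = 0 := by
      refine (mul_eq_zero.mp ?_).resolve_left hg0
      rwa [← smul_eq_mul, ← dotProduct_smul, dotProduct_comm]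
    refine ⟨0, -g, a', b ⨯₃ x, by simp, ?_⟩
    exact cross_cross_eq_of_dotProduct_eq_one (by rwa [dotProduct_comm]) hb

theorem exists_minors_eq_of_plucker (m₁₂ m₁₃ m₁₄ m₂₃ m₂₄ m₃₄ : R)
    (h : m₁₂ * m₃₄ - m₁₃ * m₂₄ + m₁₄ * m₂₃ = 0) :
    ∃ p₁ p₂ p₃ p₄ r₁ r₂ r₃ r₄ : R,
      p₁ * r₂ - p₂ * r₁ = m₁₂ ∧ p₁ * r₃ - p₃ * r₁ = m₁₃ ∧ p₁ * r₄ - p₄ * r₁ = m₁₄ ∧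
      p₂ * r₃ - p₃ * r₂ = m₂₃ ∧ p₂ * r₄ - p₄ * r₂ = m₂₄ ∧ p₃ * r₄ - p₄ * r₃ = m₃₄ := by
  have hdot : ![m₁₂, m₁₃, m₁₄] ⬝ᵥ ![m₃₄, -m₂₄, m₂₃] = 0 := by
    rw [vec3_dotProduct]; simp only [cons_val]; linear_combination h
  obtain ⟨s, t, P, Q, hPQa, hPQb⟩ := exists_smul_sub_smul_and_cross_eq hdot
  simp only [funext_iff, Fin.forall_fin_succ, cross_apply, Pi.sub_apply, Pi.smul_apply,
    smul_eq_mul, Fin.succ_zero_eq_one, Fin.succ_one_eq_two, cons_val, IsEmpty.forall_iff,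
    and_true] at hPQa hPQb
  obtain ⟨h₁₂, h₁₃, h₁₄⟩ := hPQa
  obtain ⟨h₃₄, h₂₄, h₂₃⟩ := hPQb
  exact ⟨s, P 0, P 1, P 2, t, Q 0, Q 1, Q 2, by linear_combination h₁₂, by linear_combination h₁₃,
    by linear_combination h₁₄, h₂₃, by linear_combination -h₂₄, h₃₄⟩

end BezoutDomain

/-- Existence of a Bhargava cube (presented via its 2×4 minor matrix) realizing any
pair of integral binary quadratic forms of equal discriminant. -/
theorem bhargava_cube_exists (A₁ B₁ C₁ A₂ B₂ C₂ : ℤ)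
    (hdisc : B₁ ^ 2 - 4 * A₁ * C₁ = B₂ ^ 2 - 4 * A₂ * C₂) :
    ∃ p₁ p₂ p₃ p₄ r₁ r₂ r₃ r₄ : ℤ,
      p₁ * r₂ - p₂ * r₁ = -A₁ ∧
      p₁ * r₃ - p₃ * r₁ = -A₂ ∧
      p₁ * r₄ - p₄ * r₁ = -((B₁ + B₂) / 2) ∧
      p₂ * r₃ - p₃ * r₂ = (B₁ - B₂) / 2 ∧
      p₂ * r₄ - p₄ * r₂ = -C₂ ∧
      p₃ * r₄ - p₄ * r₃ = -C₁ := by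
  obtain ⟨d, hd⟩ : Even (B₁ - B₂) := by
    have : Even (B₁ ^ 2 - B₂ ^ 2) := ⟨2 * (A₁ * C₁ - A₂ * C₂), by linear_combination hdisc⟩
    rwa [Int.even_sub, Int.even_pow' two_ne_zero, Int.even_pow' two_ne_zero, ← Int.even_sub]
      at this
  obtain rfl : B₁ = B₂ + 2 * d := by omega
  rw [show (B₂ + 2 * d + B₂) / 2 = B₂ + d by omega, show (B₂ + 2 * d - B₂) / 2 = d by omega]
  refine exists_minors_eq_of_plucker _ _ _ _ _ _ ?_
  have h4 : 4 * (A₁ * C₁ - A₂ * C₂ - (B₂ + d) * d) = 0 := by linear_combination -hdisc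
  linear_combination (mul_eq_zero.mp h4).resolve_left four_ne_zero
end

section
/- Let a, d be positive integers and b an integer with 0 ≤ b ≤ d−1. Set e = gcd(b,d) (with gcd(0,d) = d), and let δ, β be any integers satisfying −δb + βd = e. Set d' = ad/e and let b' be the unique integer with 0 ≤ b' < d' and b' ≡ δa (mod d'). Then there exists S ∈ SL(2,ℤ) such that [[a,b],[0,d]] · [[0,−1],[1,0]] = S · [[e, b'],[0, d']]. (The residue b' mod d' does not depend on the choice of the solution (δ,β).) -/
/-!
Writing `b = e p` and `d = e q`, the Bézout relation becomes `-δ p + β q = 1`, so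
`S₀ = [[p, -β], [q, -δ]]` lies in `SL(2,ℤ)` and `[[a,b],[0,d]] W₁ = S₀ [[e, δa], [0, aq]]`.
Replacing `S₀` by `S₀ [[1,k],[0,1]]` turns `δa` into `δa - k·aq`, which reaches every `b'`
congruent to `δa` modulo `d' = aq`.
-/

namespace Matrix

variable {R : Type*} [CommRing R]

theorem det_bezout_completion (p q δ β k : R) :
    !![p, -β + k * p; q, -δ + k * q].det = -δ * p + β * q := by
  rw [det_fin_two_of]
  ring

theorem upperTriangular_mul_W1_eq_bezout_mul (a e p q δ β k : R) (h : -δ * p + β * q = 1) :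
    !![a, e * p; 0, e * q] * !![0, -1; 1, 0]
      = !![p, -β + k * p; q, -δ + k * q] * !![e, δ * a - a * q * k; 0, a * q] := by
  rw [mul_fin_two, mul_fin_two]
  ext i j
  fin_cases i <;> fin_cases j <;>
    simp only [Fin.zero_eta, Fin.mk_one, Fin.isValue, of_apply, cons_val', cons_val_zero,
      cons_val_one, cons_val_fin_one, mul_zero, mul_one, zero_add, add_zero, mul_neg, neg_zero]
  · ring
  · linear_combination a * h
  · ring
  · ring

end Matrix

theorem orbit_datum_W1_general (a b d : ℤ) (hd : 0 < d)
    (e : ℤ) (he : e = Int.gcd b d)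
    (δ β : ℤ) (hδβ : -δ * b + β * d = e)
    (d' : ℤ) (hd' : d' = a * d / e)
    (b' : ℤ) (hb'2 : b' ≡ δ * a [ZMOD d']) :
    ∃ S : Matrix.SpecialLinearGroup (Fin 2) ℤ,
      !![a, b; 0, d] * !![0, -1; 1, 0]
        = (S : Matrix (Fin 2) (Fin 2) ℤ) * !![e, b'; 0, d'] := by
  have he0 : e ≠ 0 := he ▸ Int.natCast_ne_zero.mpr (Int.gcd_ne_zero_right hd.ne')
  obtain ⟨p, rfl⟩ : e ∣ b := he ▸ Int.gcd_dvd_left b d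
  obtain ⟨q, rfl⟩ : e ∣ d := he ▸ Int.gcd_dvd_right _ d
  have hpq : -δ * p + β * q = 1 := mul_left_cancel₀ he0 (by linear_combination hδβ)
  obtain rfl : d' = a * q := by rw [hd', mul_left_comm, Int.mul_ediv_cancel_left _ he0]
  obtain ⟨k, hk⟩ := hb'2.dvd
  obtain rfl : b' = δ * a - a * q * k := by linear_combination -hk
  exact ⟨⟨_, (Matrix.det_bezout_completion p q δ β k).trans hpq⟩,
    Matrix.upperTriangular_mul_W1_eq_bezout_mul a e p q δ β k hpq⟩

/-- Transformation of the upper-triangular orbit datum `(a,b,d)` under the order-4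
automorphism `W₁ = [[0,−1],[1,0]]` of `x²+y²`: with `e = gcd(b,d)`,
`−δb + βd = e`, `d' = ad/e` and `b' ≡ δa (mod d')`, `0 ≤ b' < d'`, there is
`S ∈ SL(2,ℤ)` with `[[a,b],[0,d]]·W₁ = S·[[e,b'],[0,d']]`. -/
theorem orbit_datum_W1 (a b d : ℤ) (ha : 0 < a) (hd : 0 < d)
    (hb0 : 0 ≤ b) (hb1 : b ≤ d - 1)
    (e : ℤ) (he : e = Int.gcd b d)
    (δ β : ℤ) (hδβ : -δ * b + β * d = e)
    (d' : ℤ) (hd' : d' = a * d / e)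
    (b' : ℤ) (hb'0 : 0 ≤ b') (hb'1 : b' < d') (hb'2 : b' ≡ δ * a [ZMOD d']) :
    ∃ S : Matrix.SpecialLinearGroup (Fin 2) ℤ,
      !![a, b; 0, d] * !![0, -1; 1, 0]
        = (S : Matrix (Fin 2) (Fin 2) ℤ) * !![e, b'; 0, d'] :=
  orbit_datum_W1_general a b d hd e he δ β hδβ d' hd' b' hb'2
end

section
/- Bijection between Pell solutions and automorphisms: Let f(x,y) = Ax² + Bxy + Cy² be an integral binary quadratic form with gcd(A,B,C) = 1 and discriminant D = B² − 4AC < 0. For every pair of integers (p,q) with p² − Dq² = 4, the integers p − qB and p + qB are even, the matrix K(f,p,q) = [[(p−qB)/2, qA],[−qC, (p+qB)/2]] lies in SL(2,ℤ), and f((x,y)·K(f,p,q)) = f(x,y) for all integers x, y. Moreover, the map (p,q) ↦ K(f,p,q) is a bijection from the set of integer solutions of p² − Dq² = 4 onto Aut(f). -/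
/-!
Comparing the coefficients of `f((x,y)K) = f(x,y)` and using `det K = 1` gives
`A(d - a) = Bb` and `Ac = -Cb` for `K = [[a, b], [c, d]]`, so primitivity forces `A ∣ b`, and
with `q = b / A` the matrix has the shape `[[a, qA], [-qC, a + qB]]`. For matrices of this shape
`f((x,y)K) = det K · f(x,y)` and `4 det K = (tr K)² - D q²`, so `K ↦ (tr K, q)` inverts
`(p, q) ↦ K(f,p,q)`.
-/

open Matrix

def binaryForm {R : Type*} [CommRing R] (A B C x y : R) : R :=
  A * x ^ 2 + B * x * y + C * y ^ 2

theorem binaryForm_comp_eq_det_mul {R : Type*} [CommRing R] {A B C a d q : R}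
    (h : d - a = q * B) (x y : R) :
    binaryForm A B C (a * x + -q * C * y) (q * A * x + d * y)
      = (!![a, q * A; -q * C, d]).det * binaryForm A B C x y := by
  obtain rfl : d = a + q * B := by linear_combination h
  simp only [binaryForm, det_fin_two_of]
  ring

def IsProperAut (A B C : ℤ) (K : Matrix (Fin 2) (Fin 2) ℤ) : Prop :=
  K.det = 1 ∧ ∀ x y : ℤ,
    binaryForm A B C (K 0 0 * x + K 1 0 * y) (K 0 1 * x + K 1 1 * y) = binaryForm A B C x y

/-- The matrix `K(f,p,q)`; the divisions are exact when `p² - Dq² = 4`. -/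
def pellMatrix (A B C p q : ℤ) : Matrix (Fin 2) (Fin 2) ℤ :=
  !![(p - q * B) / 2, q * A; -q * C, (p + q * B) / 2]

theorem Int.ne_zero_of_discr_neg {A B C : ℤ} (hD : B ^ 2 - 4 * A * C < 0) : A ≠ 0 := by
  rintro rfl
  nlinarith [sq_nonneg B]

theorem Int.dvd_of_gcd_eq_one_of_dvd_mul {A B C b : ℤ} (hprim : Int.gcd A (Int.gcd B C) = 1)
    (hB : A ∣ B * b) (hC : A ∣ C * b) : A ∣ b := by
  have hcop : IsCoprime A (Int.gcd B C) := Int.isCoprime_iff_gcd_eq_one.mpr hprim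
  refine hcop.dvd_of_dvd_mul_left ?_
  rw [Int.gcd_eq_gcd_ab B C]
  have : (B * Int.gcdA B C + C * Int.gcdB B C) * b
      = Int.gcdA B C * (B * b) + Int.gcdB B C * (C * b) := by ring
  rw [this]
  exact dvd_add (hB.mul_left _) (hC.mul_left _)

section Pell

variable {A B C p q : ℤ}

theorem two_dvd_sub_of_pell (h : p ^ 2 - (B ^ 2 - 4 * A * C) * q ^ 2 = 4) : 2 ∣ p - q * B :=
  -- `(p - qB)² = 4 - 4ACq² - 2qB(p - qB)` is even
  Int.prime_two.dvd_of_dvd_pow (n := 2)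
    ⟨2 - 2 * A * C * q ^ 2 - q * B * (p - q * B), by linear_combination h⟩

theorem two_dvd_add_of_pell (h : p ^ 2 - (B ^ 2 - 4 * A * C) * q ^ 2 = 4) : 2 ∣ p + q * B := by
  obtain ⟨k, hk⟩ := two_dvd_sub_of_pell h
  exact ⟨k + q * B, by linear_combination hk⟩

theorem pellMatrix_eq_of_pell (h : p ^ 2 - (B ^ 2 - 4 * A * C) * q ^ 2 = 4) :
    ∃ a, 2 * a = p - q * B ∧ pellMatrix A B C p q = !![a, q * A; -q * C, a + q * B] := by
  obtain ⟨a, ha⟩ := two_dvd_sub_of_pell h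
  have h00 : (p - q * B) / 2 = a := by omega
  have h11 : (p + q * B) / 2 = a + q * B := by omega
  exact ⟨a, ha.symm, by rw [pellMatrix, h00, h11]⟩

theorem trace_pellMatrix (h : p ^ 2 - (B ^ 2 - 4 * A * C) * q ^ 2 = 4) :
    (pellMatrix A B C p q).trace = p := by
  obtain ⟨a, ha, hK⟩ := pellMatrix_eq_of_pell h
  rw [hK, trace_fin_two_of]
  linarith

theorem det_pellMatrix (h : p ^ 2 - (B ^ 2 - 4 * A * C) * q ^ 2 = 4) :
    (pellMatrix A B C p q).det = 1 := by
  obtain ⟨a, ha, hK⟩ := pellMatrix_eq_of_pell h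
  rw [hK, det_fin_two_of]
  refine mul_left_cancel₀ (four_ne_zero (α := ℤ)) ?_
  linear_combination h + (2 * a + p + q * B) * ha

theorem pellMatrix_isProperAut (h : p ^ 2 - (B ^ 2 - 4 * A * C) * q ^ 2 = 4) :
    IsProperAut A B C (pellMatrix A B C p q) := by
  refine ⟨det_pellMatrix h, fun x y => ?_⟩
  obtain ⟨a, -, hK⟩ := pellMatrix_eq_of_pell h
  have hdet := det_pellMatrix h
  rw [hK] at hdet ⊢
  simp only [of_apply, cons_val', cons_val_zero, cons_val_one, empty_val', cons_val_fin_one]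
  rw [binaryForm_comp_eq_det_mul (by ring), hdet, one_mul]

theorem pellMatrix_injOn (hA : A ≠ 0) :
    Set.InjOn (fun pq : ℤ × ℤ => pellMatrix A B C pq.1 pq.2)
      {pq | pq.1 ^ 2 - (B ^ 2 - 4 * A * C) * pq.2 ^ 2 = 4} := by
  rintro ⟨p₁, q₁⟩ (h₁ : p₁ ^ 2 - _ = 4) ⟨p₂, q₂⟩ (h₂ : p₂ ^ 2 - _ = 4)
    (heq : pellMatrix A B C p₁ q₁ = pellMatrix A B C p₂ q₂)
  have hp : p₁ = p₂ := by
    rw [← trace_pellMatrix h₁, ← trace_pellMatrix h₂]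
    exact congrArg trace heq
  have hq : q₁ * A = q₂ * A := congrFun (congrFun heq 0) 1
  rw [hp, mul_right_cancel₀ hA hq]

end Pell

namespace IsProperAut

variable {A B C : ℤ} {K : Matrix (Fin 2) (Fin 2) ℤ}

theorem coeff_relations (hK : IsProperAut A B C K) :
    A * (K 1 1 - K 0 0) = B * K 0 1 ∧ A * K 1 0 = -(C * K 0 1) := by
  obtain ⟨hdet, hinv⟩ := hK
  rw [det_fin_two] at hdet
  have e10 := hinv 1 0
  have e01 := hinv 0 1
  have e11 := hinv 1 1
  simp only [binaryForm] at e10 e01 e11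
  constructor
  · refine mul_left_cancel₀ (two_ne_zero (α := ℤ)) ?_
    linear_combination (-2 * K 1 1) * e10 + K 0 1 * (e11 - e10 - e01)
      + (2 * A * K 0 0 + B * K 0 1) * hdet
  · refine mul_left_cancel₀ (two_ne_zero (α := ℤ)) ?_
    linear_combination K 1 1 * (e11 - e10 - e01) - 2 * K 0 1 * e01
      - (2 * A * K 1 0 + B * K 1 1) * hdet

theorem exists_pell_shape (hK : IsProperAut A B C K) (hprim : Int.gcd A (Int.gcd B C) = 1)
    (hA : A ≠ 0) : ∃ q, K 0 1 = q * A ∧ K 1 0 = -q * C ∧ K 1 1 - K 0 0 = q * B := by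
  obtain ⟨hBb, hCb⟩ := hK.coeff_relations
  obtain ⟨q, hq⟩ := Int.dvd_of_gcd_eq_one_of_dvd_mul hprim ⟨_, hBb.symm⟩ ⟨-K 1 0, by linarith⟩
  refine ⟨q, by rw [hq, mul_comm], mul_left_cancel₀ hA ?_, mul_left_cancel₀ hA ?_⟩
  · linear_combination hCb - C * hq
  · linear_combination hBb + B * hq

theorem trace_pell (hK : IsProperAut A B C K) {q : ℤ} (h01 : K 0 1 = q * A)
    (h10 : K 1 0 = -q * C) (h11 : K 1 1 - K 0 0 = q * B) :
    K.trace ^ 2 - (B ^ 2 - 4 * A * C) * q ^ 2 = 4 := by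
  have hdet := hK.1
  rw [det_fin_two] at hdet
  rw [trace_fin_two]
  linear_combination 4 * hdet + (K 1 1 - K 0 0 + q * B) * h11 + 4 * K 1 0 * h01
    + 4 * A * q * h10

theorem pellMatrix_trace_eq {q : ℤ} (h01 : K 0 1 = q * A) (h10 : K 1 0 = -q * C)
    (h11 : K 1 1 - K 0 0 = q * B) : pellMatrix A B C K.trace q = K := by
  have h00' : (K.trace - q * B) / 2 = K 0 0 := by rw [trace_fin_two, ← h11]; omega
  have h11' : (K.trace + q * B) / 2 = K 1 1 := by rw [trace_fin_two, ← h11]; omega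
  rw [pellMatrix, h00', h11', ← h01, ← h10, eta_fin_two K]
  rfl

end IsProperAut

/-- Bijection between solutions of the Pell equation `p² − Dq² = 4` and the proper
automorphism group of a primitive binary quadratic form `f = Ax²+Bxy+Cy²` of
negative discriminant `D = B²−4AC`: each solution `(p,q)` gives the matrix
`K(f,p,q) = [[(p−qB)/2, qA],[−qC,(p+qB)/2]] ∈ SL(2,ℤ)` leaving `f` invariant under
`(x,y) ↦ (x,y)K`, and this assignment is a bijection onto `Aut(f)`. -/
theorem pell_automorphism_bijection (A B C : ℤ)
    (hprim : Int.gcd A (Int.gcd B C) = 1)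
    (hD : B ^ 2 - 4 * A * C < 0) :
    (∀ p q : ℤ, p ^ 2 - (B ^ 2 - 4 * A * C) * q ^ 2 = 4 →
      2 ∣ (p - q * B) ∧ 2 ∣ (p + q * B) ∧
      (!![(p - q * B) / 2, q * A; -q * C, (p + q * B) / 2] :
        Matrix (Fin 2) (Fin 2) ℤ).det = 1 ∧
      (∀ x y : ℤ,
        A * ((p - q * B) / 2 * x + (-q * C) * y) ^ 2
          + B * ((p - q * B) / 2 * x + (-q * C) * y)
              * (q * A * x + (p + q * B) / 2 * y)
          + C * (q * A * x + (p + q * B) / 2 * y) ^ 2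
        = A * x ^ 2 + B * x * y + C * y ^ 2)) ∧
    Set.BijOn
      (fun pq : ℤ × ℤ =>
        (!![(pq.1 - pq.2 * B) / 2, pq.2 * A; -pq.2 * C, (pq.1 + pq.2 * B) / 2] :
          Matrix (Fin 2) (Fin 2) ℤ))
      {pq : ℤ × ℤ | pq.1 ^ 2 - (B ^ 2 - 4 * A * C) * pq.2 ^ 2 = 4}
      {K : Matrix (Fin 2) (Fin 2) ℤ | K.det = 1 ∧
        ∀ x y : ℤ,
          A * (K 0 0 * x + K 1 0 * y) ^ 2
            + B * (K 0 0 * x + K 1 0 * y) * (K 0 1 * x + K 1 1 * y)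
            + C * (K 0 1 * x + K 1 1 * y) ^ 2
          = A * x ^ 2 + B * x * y + C * y ^ 2} := by
  have hA : A ≠ 0 := Int.ne_zero_of_discr_neg hD
  refine ⟨fun p q h => ⟨two_dvd_sub_of_pell h, two_dvd_add_of_pell h, det_pellMatrix h,
    (pellMatrix_isProperAut h).2⟩, ?_⟩
  show Set.BijOn (fun pq : ℤ × ℤ => pellMatrix A B C pq.1 pq.2) _ {K | IsProperAut A B C K}
  refine ⟨fun pq h => pellMatrix_isProperAut h, pellMatrix_injOn hA, fun K hK => ?_⟩
  obtain ⟨q, h01, h10, h11⟩ := hK.exists_pell_shape hprim hA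
  exact ⟨(K.trace, q), hK.trace_pell h01 h10 h11, IsProperAut.pellMatrix_trace_eq h01 h10 h11⟩
end

section
/- Quadratic forms with nontrivial automorphisms: Let f(x,y) = Ax² + Bxy + Cy² be an integral binary quadratic form with A > 0 and D = B² − 4AC < 0, and let r = gcd(A,B,C). If there exists K ∈ SL(2,ℤ) with K ≠ I₂ and K ≠ −I₂ such that f((x,y)K) = f(x,y) for all integers x,y, then D = −3r² or D = −4r². -/
/-!
Write `K = !![a, b; c, d]`, `t = a + d` and `D = B² - 4AC`. Invariance of `f` under `K` makes
`(b, d - a, -c)` proportional to `(A, B, C)`, and together with `ad - bc = 1` this gives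
`D b² = (t² - 4) A²`, `D (d - a)² = (t² - 4) B²` and `D c² = (t² - 4) C²`.
Since `D < 0`, `t² - 4 ≤ 0`; equality forces `b = c = 0`, `a = d`, i.e. `K = ±I₂`,
so `t² - 4 ∈ {-3, -4}`. Taking gcds, `D ∣ (t² - 4) r²`, so `D / r²` is a negative divisor of
`t² - 4` which, being a discriminant, is `0` or `1` mod `4`; this leaves only `D / r² = t² - 4`.
-/

theorem disc_emod_four (A B C : ℤ) :
    (B ^ 2 - 4 * A * C) % 4 = 0 ∨ (B ^ 2 - 4 * A * C) % 4 = 1 := by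
  rcases Int.even_or_odd' B with ⟨m, rfl | rfl⟩
  · left; ring_nf; omega
  · right; ring_nf; omega

theorem eq_of_dvd_of_emod_four {D k : ℤ} (hk : k = -3 ∨ k = -4) (hD : D < 0) (hDk : D ∣ k)
    (hmod : D % 4 = 0 ∨ D % 4 = 1) : D = k := by
  have hle : k ≤ D := neg_le_neg_iff.mp (Int.le_of_dvd (by omega) (neg_dvd.mpr (dvd_neg.mpr hDk)))
  rcases hk with rfl | rfl <;> interval_cases D <;> first | rfl | omega | norm_num at hDk

theorem dvd_mul_gcd_sq {n k A B C : ℤ} (hA : n ∣ k * A ^ 2) (hB : n ∣ k * B ^ 2)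
    (hC : n ∣ k * C ^ 2) : n ∣ k * (Int.gcd A (Int.gcd B C) : ℤ) ^ 2 := by
  simp only [← Int.natAbs_dvd_natAbs, Int.natAbs_mul, Int.natAbs_pow] at hA hB hC ⊢
  have h := Nat.dvd_gcd hA (Nat.dvd_gcd hB hC)
  rwa [Nat.gcd_mul_left, Nat.gcd_mul_left, Nat.pow_gcd_pow, Nat.pow_gcd_pow] at h

theorem disc_eq_mul_gcd_sq_of_dvd {A B C k : ℤ} (hD : B ^ 2 - 4 * A * C < 0)
    (hk : k = -3 ∨ k = -4)
    (hA : B ^ 2 - 4 * A * C ∣ k * A ^ 2) (hB : B ^ 2 - 4 * A * C ∣ k * B ^ 2)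
    (hC : B ^ 2 - 4 * A * C ∣ k * C ^ 2) :
    B ^ 2 - 4 * A * C = k * (Int.gcd A (Int.gcd B C) : ℤ) ^ 2 := by
  set r : ℤ := (Int.gcd A (Int.gcd B C) : ℤ)
  have hrBC : r ∣ Int.gcd B C := Int.gcd_dvd_right A _
  obtain ⟨A', hA'⟩ : r ∣ A := Int.gcd_dvd_left A _
  obtain ⟨B', hB'⟩ : r ∣ B := hrBC.trans (Int.gcd_dvd_left B C)
  obtain ⟨C', hC'⟩ : r ∣ C := hrBC.trans (Int.gcd_dvd_right B C)
  have hDr : B ^ 2 - 4 * A * C = r ^ 2 * (B' ^ 2 - 4 * A' * C') := by rw [hA', hB', hC']; ring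
  have hr : r ^ 2 ≠ 0 := by
    intro h0
    rw [h0, zero_mul] at hDr
    exact hD.ne hDr
  have hD'k : B' ^ 2 - 4 * A' * C' ∣ k := by
    rw [← mul_dvd_mul_iff_left hr, ← hDr, mul_comm (r ^ 2)]
    exact dvd_mul_gcd_sq hA hB hC
  have hD' : B' ^ 2 - 4 * A' * C' < 0 := by
    rw [hDr] at hD
    exact neg_of_mul_neg_right hD (sq_nonneg r)
  rw [hDr, eq_of_dvd_of_emod_four hk hD' hD'k (disc_emod_four A' B' C'), mul_comm]

theorem sq_sub_four_eq_of_neg {t : ℤ} (ht : t ^ 2 - 4 < 0) :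
    t ^ 2 - 4 = -3 ∨ t ^ 2 - 4 = -4 := by
  have h1 : -2 < t := by nlinarith
  have h2 : t < 2 := by nlinarith
  interval_cases t <;> norm_num

theorem Matrix.eq_one_or_eq_neg_one_of_det_eq_one {R : Type*} [CommRing R] [NoZeroDivisors R]
    {K : Matrix (Fin 2) (Fin 2) R} (hdet : K.det = 1) (hb : K 0 1 = 0) (hc : K 1 0 = 0)
    (hd : K 1 1 = K 0 0) : K = 1 ∨ K = -1 := by
  rw [Matrix.det_fin_two, hb, hc, hd, mul_zero, sub_zero, mul_self_eq_one_iff] at hdet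
  rcases hdet with h | h
  · left; ext i j; fin_cases i <;> fin_cases j <;> simp [h, hb, hc, hd]
  · right; ext i j; fin_cases i <;> fin_cases j <;> simp [h, hb, hc, hd]

section Automorph

variable {A B C a b c d : ℤ}

theorem automorph_relations (hdet : a * d - b * c = 1)
    (hinv : ∀ x y : ℤ, A * (a * x + c * y) ^ 2 + B * (a * x + c * y) * (b * x + d * y)
      + C * (b * x + d * y) ^ 2 = A * x ^ 2 + B * x * y + C * y ^ 2) :
    A * (d - a) = B * b ∧ C * (a - d) = B * c := by
  have e1 := hinv 1 0
  have e2 := hinv 0 1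
  have e3 := hinv 1 1
  constructor
  · have h : 2 * (A * (d - a)) = 2 * (B * b) := by
      linear_combination -(2 * d + b) * e1 - b * e2 + b * e3 + (2 * A * a + B * b) * hdet
    linarith
  · have h : 2 * (C * (a - d)) = 2 * (B * c) := by
      linear_combination (-c) * e1 + (-c - 2 * a) * e2 + c * e3 + (B * c + 2 * C * d) * hdet
    linarith

theorem automorph_identities (hA : A ≠ 0) (hdet : a * d - b * c = 1)
    (hinv : ∀ x y : ℤ, A * (a * x + c * y) ^ 2 + B * (a * x + c * y) * (b * x + d * y)
      + C * (b * x + d * y) ^ 2 = A * x ^ 2 + B * x * y + C * y ^ 2) :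
    (B ^ 2 - 4 * A * C) * b ^ 2 = ((a + d) ^ 2 - 4) * A ^ 2 ∧
    (B ^ 2 - 4 * A * C) * (d - a) ^ 2 = ((a + d) ^ 2 - 4) * B ^ 2 ∧
    (B ^ 2 - 4 * A * C) * c ^ 2 = ((a + d) ^ 2 - 4) * C ^ 2 := by
  obtain ⟨h1, h3⟩ := automorph_relations hdet hinv
  have e1 := hinv 1 0
  have e2 := hinv 0 1
  have hAk : (B ^ 2 - 4 * A * C) * b ^ 2 = ((a + d) ^ 2 - 4) * A ^ 2 := by
    linear_combination -(A * (a + d) + 2 * A * a + B * b) * h1 - 4 * A * e1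
  refine ⟨hAk, mul_left_cancel₀ (pow_ne_zero 2 hA) ?_, ?_⟩
  · linear_combination (B ^ 2 - 4 * A * C) * (A * (d - a) + B * b) * h1 + B ^ 2 * hAk
  · linear_combination -(C * (a + d) + 2 * C * d + B * c) * h3 - 4 * C * e2

end Automorph

theorem nontrivial_aut_disc_general (A B C : ℤ)
    (hD : B ^ 2 - 4 * A * C < 0)
    (K : Matrix (Fin 2) (Fin 2) ℤ) (hdet : K.det = 1)
    (hK1 : K ≠ 1) (hK2 : K ≠ -1)
    (hinv : ∀ x y : ℤ,
      A * (K 0 0 * x + K 1 0 * y) ^ 2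
        + B * (K 0 0 * x + K 1 0 * y) * (K 0 1 * x + K 1 1 * y)
        + C * (K 0 1 * x + K 1 1 * y) ^ 2
      = A * x ^ 2 + B * x * y + C * y ^ 2) :
    B ^ 2 - 4 * A * C = -3 * (Int.gcd A (Int.gcd B C) : ℤ) ^ 2 ∨
    B ^ 2 - 4 * A * C = -4 * (Int.gcd A (Int.gcd B C) : ℤ) ^ 2 := by
  have hA : A ≠ 0 := by
    rintro rfl
    nlinarith [sq_nonneg B]
  obtain ⟨hAk, hBk, hCk⟩ := automorph_identities hA (Matrix.det_fin_two K ▸ hdet) hinv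
  have hk : (K 0 0 + K 1 1) ^ 2 - 4 < 0 := by
    have hA2 : 0 < A ^ 2 := by positivity
    have hle : (K 0 0 + K 1 1) ^ 2 - 4 ≤ 0 := by nlinarith [sq_nonneg (K 0 1)]
    refine lt_of_le_of_ne hle fun hk0 => ?_
    have hzero {x m : ℤ} (h : (B ^ 2 - 4 * A * C) * x ^ 2 = ((K 0 0 + K 1 1) ^ 2 - 4) * m ^ 2) :
        x = 0 := by
      rw [hk0, zero_mul, mul_eq_zero, or_iff_right hD.ne] at h
      exact pow_eq_zero_iff two_ne_zero |>.mp h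
    rcases Matrix.eq_one_or_eq_neg_one_of_det_eq_one hdet (hzero hAk) (hzero hCk)
      (sub_eq_zero.mp (hzero hBk)) with h | h
    exacts [hK1 h, hK2 h]
  have hk' := sq_sub_four_eq_of_neg hk
  have hdisc :=
    disc_eq_mul_gcd_sq_of_dvd hD hk' (Dvd.intro _ hAk) (Dvd.intro _ hBk) (Dvd.intro _ hCk)
  rcases hk' with h | h <;> rw [hdisc, h] <;> simp

/-- If a positive definite integral binary quadratic form `Ax²+Bxy+Cy²` with
content `r = gcd(A,B,C)` admits a proper automorphism other than `±I₂`, then its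
discriminant is `−3r²` or `−4r²`. -/
theorem nontrivial_aut_disc (A B C : ℤ) (hA : 0 < A)
    (hD : B ^ 2 - 4 * A * C < 0)
    (K : Matrix (Fin 2) (Fin 2) ℤ) (hdet : K.det = 1)
    (hK1 : K ≠ 1) (hK2 : K ≠ -1)
    (hinv : ∀ x y : ℤ,
      A * (K 0 0 * x + K 1 0 * y) ^ 2
        + B * (K 0 0 * x + K 1 0 * y) * (K 0 1 * x + K 1 1 * y)
        + C * (K 0 1 * x + K 1 1 * y) ^ 2
      = A * x ^ 2 + B * x * y + C * y ^ 2) :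
    B ^ 2 - 4 * A * C = -3 * (Int.gcd A (Int.gcd B C) : ℤ) ^ 2 ∨
    B ^ 2 - 4 * A * C = -4 * (Int.gcd A (Int.gcd B C) : ℤ) ^ 2 :=
  nontrivial_aut_disc_general A B C hD K hdet hK1 hK2 hinv
end

section
/- Forms of discriminant −3 and congruence subgroups of even level: Let f(x,y) = Ax² + Bxy + Cy² be an integral binary quadratic form with discriminant B² − 4AC = −3. Then A, B and C are all odd. Consequently, if N is an even positive integer and K = [[α,β],[γ,δ]] ∈ SL(2,ℤ) satisfies N ∣ γ and f((x,y)K) = f(x,y) for all integers x,y, then K = I₂ or K = −I₂. -/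
/-!
Reducing `B² - 4AC = -3` modulo 8 forces `A`, `B`, `C` to be odd.
An automorph `K = [[α, β], [γ, δ]]` of determinant one satisfies the linear relations
`A (α - δ) = -B β` and `A γ = -C β` (from `K M = M (Kᵀ)⁻¹` for the Gram matrix `M`), which give
`A² ((α + δ)² - 4) = (B² - 4AC) β²`. If `γ` is even, then `α`, `δ` are odd, so `α - δ` and
therefore `β` are even, as is `α + δ`; the norm equation `A² (s² - 1) = -3 b²` in the halves
`s`, `b` then forces `b = 0` (for `s = 0` it would say `A² = 3 b²`, impossible modulo 4 for odd
`A`). So `β = γ = 0` and `αδ = 1`.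
-/

lemma odd_coeffs_of_discr_eq_neg_three {A B C : ℤ} (h : B ^ 2 - 4 * A * C = -3) :
    Odd A ∧ Odd B ∧ Odd C := by
  have hB : Odd B := by
    have : Odd (B ^ 2) := ⟨2 * A * C - 2, by linear_combination h⟩
    exact (Int.odd_pow.mp this).resolve_right two_ne_zero
  obtain ⟨k, rfl⟩ := hB
  obtain ⟨j, hj⟩ := Int.even_mul_succ_self k
  have hAC4 : 4 * (A * C) = 4 * (2 * j + 1) := by linear_combination -h + 4 * hj
  have hAC : Odd (A * C) := ⟨j, by linarith⟩
  exact ⟨(Int.odd_mul.mp hAC).1, ⟨k, rfl⟩, (Int.odd_mul.mp hAC).2⟩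

lemma not_sq_eq_three_mul_sq_of_odd {a : ℤ} (ha : Odd a) (b : ℤ) : a ^ 2 ≠ 3 * b ^ 2 := by
  obtain ⟨k, rfl⟩ := ha
  intro h
  have h4 := congrArg (Int.cast : ℤ → ZMod 4) h
  push_cast at h4
  generalize (k : ZMod 4) = x, (b : ZMod 4) = y at h4
  revert x y
  decide

lemma eq_zero_of_sq_mul_sq_sub_four_eq {A t β : ℤ} (hA : Odd A) (ht : Even t) (hβ : Even β)
    (h : A ^ 2 * (t ^ 2 - 4) = -3 * β ^ 2) : β = 0 := by
  obtain ⟨s, rfl⟩ := ht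
  obtain ⟨b, rfl⟩ := hβ
  have hsb : A ^ 2 * (s ^ 2 - 1) = -3 * b ^ 2 := by
    linarith [show 4 * (A ^ 2 * (s ^ 2 - 1)) = 4 * (-3 * b ^ 2) by linear_combination h]
  rcases eq_or_ne s 0 with rfl | hs
  · exact absurd (by linear_combination -hsb) (not_sq_eq_three_mul_sq_of_odd hA b)
  · have hs2 : 0 < s ^ 2 := by positivity
    have hb : b ^ 2 = 0 := by nlinarith [sq_nonneg b, sq_nonneg A]
    simp [pow_eq_zero_iff two_ne_zero |>.mp hb]

lemma odd_diag_of_det_eq_one {K : Matrix (Fin 2) (Fin 2) ℤ} (hdet : K.det = 1)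
    (hγ : Even (K 1 0)) : Odd (K 0 0) ∧ Odd (K 1 1) := by
  rw [Matrix.det_fin_two] at hdet
  obtain ⟨c, hc⟩ := hγ
  exact Int.odd_mul.mp ⟨K 0 1 * c, by linear_combination hdet + K 0 1 * hc⟩

def IsAutomorph (A B C : ℤ) (K : Matrix (Fin 2) (Fin 2) ℤ) : Prop :=
  ∀ x y : ℤ,
    A * (K 0 0 * x + K 1 0 * y) ^ 2
      + B * (K 0 0 * x + K 1 0 * y) * (K 0 1 * x + K 1 1 * y)
      + C * (K 0 1 * x + K 1 1 * y) ^ 2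
    = A * x ^ 2 + B * x * y + C * y ^ 2

namespace IsAutomorph

variable {A B C : ℤ} {K : Matrix (Fin 2) (Fin 2) ℤ}

lemma mul_diag_sub (hK : IsAutomorph A B C K) (hdet : K.det = 1) :
    A * (K 0 0 - K 1 1) = -(B * K 0 1) := by
  rw [Matrix.det_fin_two] at hdet
  have h10 := hK 1 0
  have h11 := hK 1 1
  have h01 := hK 0 1
  refine mul_left_cancel₀ (two_ne_zero' ℤ) ?_
  linear_combination
    2 * K 1 1 * h10 - K 0 1 * (h11 - h10 - h01) - (2 * A * K 0 0 + B * K 0 1) * hdet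

lemma mul_lower (hK : IsAutomorph A B C K) (hdet : K.det = 1) :
    A * K 1 0 = -(C * K 0 1) := by
  rw [Matrix.det_fin_two] at hdet
  have h10 := hK 1 0
  have h11 := hK 1 1
  have h01 := hK 0 1
  refine mul_left_cancel₀ (two_ne_zero' ℤ) ?_
  linear_combination
    -2 * K 1 0 * h10 + K 0 0 * (h11 - h10 - h01) - (B * K 0 0 + 2 * C * K 0 1) * hdet

lemma sq_mul_trace_sq_sub_four (hK : IsAutomorph A B C K) (hdet : K.det = 1) :
    A ^ 2 * (K.trace ^ 2 - 4) = (B ^ 2 - 4 * A * C) * K 0 1 ^ 2 := by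
  have hsub := hK.mul_diag_sub hdet
  have hlow := hK.mul_lower hdet
  rw [Matrix.det_fin_two] at hdet
  rw [Matrix.trace_fin_two]
  linear_combination (A * (K 0 0 - K 1 1) - B * K 0 1) * hsub + 4 * A ^ 2 * hdet
    + 4 * A * K 0 1 * hlow

lemma even_upper (hK : IsAutomorph A B C K) (hdet : K.det = 1) (hB : Odd B)
    (hγ : Even (K 1 0)) : Even (K 0 1) := by
  obtain ⟨hα, hδ⟩ := odd_diag_of_det_eq_one hdet hγ
  have hBβ : Even (B * K 0 1) := by
    rw [← even_neg, ← hK.mul_diag_sub hdet]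
    exact (hα.sub_odd hδ).mul_left A
  exact (Int.even_mul.mp hBβ).resolve_left (Int.not_even_iff_odd.mpr hB)

lemma upper_eq_zero (hK : IsAutomorph A B C K) (hdet : K.det = 1)
    (hdisc : B ^ 2 - 4 * A * C = -3) (hγ : Even (K 1 0)) : K 0 1 = 0 := by
  obtain ⟨hA, hB, -⟩ := odd_coeffs_of_discr_eq_neg_three hdisc
  obtain ⟨hα, hδ⟩ := odd_diag_of_det_eq_one hdet hγ
  have hnorm := hK.sq_mul_trace_sq_sub_four hdet
  rw [hdisc] at hnorm
  exact eq_zero_of_sq_mul_sq_sub_four_eq hA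
    (by simpa only [Matrix.trace_fin_two] using hα.add_odd hδ) (hK.even_upper hdet hB hγ) hnorm

lemma eq_one_or_neg_one (hK : IsAutomorph A B C K) (hdet : K.det = 1)
    (hdisc : B ^ 2 - 4 * A * C = -3) (hγ : Even (K 1 0)) : K = 1 ∨ K = -1 := by
  have hβ := hK.upper_eq_zero hdet hdisc hγ
  have hγ0 : K 1 0 = 0 := by
    have hA : A ≠ 0 := by rintro rfl; simpa using (odd_coeffs_of_discr_eq_neg_three hdisc).1
    simpa [hβ, hA] using hK.mul_lower hdet
  rw [Matrix.det_fin_two, hβ, zero_mul, sub_zero] at hdet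
  rcases Int.eq_one_or_neg_one_of_mul_eq_one' hdet with ⟨h0, h1⟩ | ⟨h0, h1⟩
  · left
    ext i j
    fin_cases i <;> fin_cases j <;> simp [h0, h1, hβ, hγ0]
  · right
    ext i j
    fin_cases i <;> fin_cases j <;> simp [h0, h1, hβ, hγ0]

end IsAutomorph

/-- For a form of discriminant `−3` all coefficients are odd; hence any proper
automorphism lying in `Γ₀(N)` with `N` even and positive is `±I₂`. -/
theorem disc_neg_three_odd_coeffs_and_gamma0 (A B C : ℤ)
    (hdisc : B ^ 2 - 4 * A * C = -3) :
    Odd A ∧ Odd B ∧ Odd C ∧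
    ∀ N : ℕ, 0 < N → Even N →
      ∀ K : Matrix (Fin 2) (Fin 2) ℤ, K.det = 1 → (N : ℤ) ∣ K 1 0 →
        (∀ x y : ℤ,
          A * (K 0 0 * x + K 1 0 * y) ^ 2
            + B * (K 0 0 * x + K 1 0 * y) * (K 0 1 * x + K 1 1 * y)
            + C * (K 0 1 * x + K 1 1 * y) ^ 2
          = A * x ^ 2 + B * x * y + C * y ^ 2) →
        K = 1 ∨ K = -1 := by
  obtain ⟨hA, hB, hC⟩ := odd_coeffs_of_discr_eq_neg_three hdisc
  refine ⟨hA, hB, hC, fun N _ hN K hdet hNγ hK => ?_⟩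
  have hγ : Even (K 1 0) :=
    even_iff_two_dvd.mpr (((Int.even_coe_nat N).mpr hN).two_dvd.trans hNγ)
  exact IsAutomorph.eq_one_or_neg_one hK hdet hdisc hγ
end

section
/- Reduced forms of discriminant −16: Every integral binary quadratic form f(x,y) = Ax² + Bxy + Cy² with A > 0 and discriminant B² − 4AC = −16 is properly equivalent (i.e. equal to f·g for some g ∈ SL(2,ℤ)) to exactly one of the two forms x² + 4y² and 2x² + 2y²; these two forms are not properly equivalent to each other. -/
/-!
Translations `(x, y) ↦ (x + m y, y)` move the middle coefficient of a positive definite form into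
`(-A, A]`, and the swap `(x, y) ↦ (y, -x)` exchanges `A` and `C`; alternating the two strictly
decreases `A` until `-A < B ≤ A ≤ C`. For discriminant `-16` this forces `3A² ≤ 16`, leaving only
`x² + 4y²` and `2x² + 2y²`. They are inequivalent because a properly equivalent form represents its
first coefficient, and `x² + 4y²` does not represent `2`.
-/

/-- Proper equivalence of integral binary quadratic forms: `A'x²+B'xy+C'y²` is the
transform of `Ax²+Bxy+Cy²` by some `[[α,β],[γ,δ]] ∈ SL(2,ℤ)` acting by
`(x,y) ↦ (x,y)·g`, i.e. `A'x²+B'xy+C'y² = A(αx+γy)² + B(αx+γy)(βx+δy) + C(βx+δy)²`. -/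
def ProperEquiv (A B C A' B' C' : ℤ) : Prop :=
  ∃ α β γ δ : ℤ, α * δ - β * γ = 1 ∧
    ∀ x y : ℤ,
      A' * x ^ 2 + B' * x * y + C' * y ^ 2
        = A * (α * x + γ * y) ^ 2 + B * (α * x + γ * y) * (β * x + δ * y)
          + C * (β * x + δ * y) ^ 2

namespace ProperEquiv

variable {A B C A' B' C' A'' B'' C'' : ℤ}

theorem trans (h₁ : ProperEquiv A B C A' B' C') (h₂ : ProperEquiv A' B' C' A'' B'' C'') :
    ProperEquiv A B C A'' B'' C'' := by
  obtain ⟨a₁, b₁, c₁, d₁, hdet₁, hf₁⟩ := h₁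
  obtain ⟨a₂, b₂, c₂, d₂, hdet₂, hf₂⟩ := h₂
  refine ⟨a₁ * a₂ + c₁ * b₂, b₁ * a₂ + d₁ * b₂, a₁ * c₂ + c₁ * d₂, b₁ * c₂ + d₁ * d₂,
    by linear_combination (a₂ * d₂ - b₂ * c₂) * hdet₁ + hdet₂, fun x y => ?_⟩
  rw [hf₂, hf₁]
  ring

theorem symm (h : ProperEquiv A B C A' B' C') : ProperEquiv A' B' C' A B C := by
  obtain ⟨a, b, c, d, hdet, hf⟩ := h
  refine ⟨d, -b, -c, a, by linear_combination hdet, fun x y => ?_⟩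
  have hx : a * (d * x - c * y) + c * (-b * x + a * y) = x := by linear_combination x * hdet
  have hy : b * (d * x - c * y) + d * (-b * x + a * y) = y := by linear_combination y * hdet
  have h := hf (d * x - c * y) (-b * x + a * y)
  rw [hx, hy] at h
  linear_combination -h

theorem represents (h : ProperEquiv A B C A' B' C') :
    ∃ x y : ℤ, A * x ^ 2 + B * x * y + C * y ^ 2 = A' := by
  obtain ⟨a, b, c, d, -, hf⟩ := h
  exact ⟨a, b, by simpa using (hf 1 0).symm⟩

end ProperEquiv

theorem properEquiv_translate (A B C m : ℤ) :
    ProperEquiv A B C A (B + 2 * m * A) (A * m ^ 2 + B * m + C) :=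
  ⟨1, 0, m, 1, by ring, fun _ _ => by ring⟩

theorem properEquiv_swap (A B C : ℤ) : ProperEquiv A B C C (-B) A :=
  ⟨0, -1, 1, 0, by ring, fun _ _ => by ring⟩

theorem exists_translate_mem_Ioc {A : ℤ} (hA : 0 < A) (B : ℤ) :
    ∃ m : ℤ, -A < B + 2 * m * A ∧ B + 2 * m * A ≤ A := by
  have hdiv := Int.emod_add_mul_ediv (A - B) (2 * A)
  have hlo := Int.emod_nonneg (A - B) (by positivity : 2 * A ≠ 0)
  have hhi := Int.emod_lt_of_pos (A - B) (by positivity : 0 < 2 * A)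
  exact ⟨(A - B) / (2 * A), by linarith, by linarith⟩

theorem exists_properEquiv_reduced (A B C : ℤ) (hA : 0 < A) (hD : B ^ 2 - 4 * A * C < 0) :
    ∃ A' B' C', ProperEquiv A B C A' B' C' ∧ B' ^ 2 - 4 * A' * C' = B ^ 2 - 4 * A * C ∧
      -A' < B' ∧ B' ≤ A' ∧ A' ≤ C' := by
  induction hn : A.toNat using Nat.strong_induction_on generalizing A B C with
  | _ n ih =>
  obtain ⟨m, hlo, hhi⟩ := exists_translate_mem_Ioc hA B
  set B₁ := B + 2 * m * A
  set C₁ := A * m ^ 2 + B * m + C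
  have hT : ProperEquiv A B C A B₁ C₁ := properEquiv_translate A B C m
  have hD₁ : B₁ ^ 2 - 4 * A * C₁ = B ^ 2 - 4 * A * C := by ring
  rcases le_or_gt A C₁ with hAC | hCA
  · exact ⟨A, B₁, C₁, hT, hD₁, hlo, hhi, hAC⟩
  · have hC₁ : 0 < C₁ := by nlinarith [sq_nonneg B₁]
    obtain ⟨A', B', C', hE, hD', hred⟩ :=
      ih C₁.toNat (by omega) C₁ (-B₁) A hC₁ (by linarith) rfl
    exact ⟨A', B', C', hT.trans ((properEquiv_swap A B₁ C₁).trans hE),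
      by linarith, hred⟩

theorem reduced_of_discr_eq_neg_sixteen {A B C : ℤ} (hlo : -A < B) (hhi : B ≤ A) (hAC : A ≤ C)
    (hD : B ^ 2 - 4 * A * C = -16) : (A = 1 ∧ B = 0 ∧ C = 4) ∨ (A = 2 ∧ B = 0 ∧ C = 2) := by
  have hA : 0 < A := by linarith
  have hA2 : A ≤ 2 := by nlinarith
  interval_cases A <;> interval_cases B <;> omega

theorem not_exists_sq_add_four_mul_sq_eq_two : ¬ ∃ x y : ℤ, x ^ 2 + 4 * y ^ 2 = 2 := by
  rintro ⟨x, y, h⟩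
  have hy : y = 0 := by nlinarith [sq_nonneg x, sq_nonneg y]
  subst hy
  have hx₁ : -1 ≤ x := by nlinarith
  have hx₂ : x ≤ 1 := by nlinarith
  interval_cases x <;> omega

/-- Every positive definite integral binary quadratic form of discriminant `−16`
is properly equivalent to exactly one of `x²+4y²` and `2x²+2y²`; and these two
forms are not properly equivalent to each other. -/
theorem reduced_forms_disc_neg_sixteen :
    (∀ A B C : ℤ, 0 < A → B ^ 2 - 4 * A * C = -16 →
      Xor' (ProperEquiv A B C 1 0 4) (ProperEquiv A B C 2 0 2)) ∧
    ¬ ProperEquiv 1 0 4 2 0 2 := by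
  have hne : ¬ ProperEquiv 1 0 4 2 0 2 := fun h =>
    not_exists_sq_add_four_mul_sq_eq_two (by simpa using h.represents)
  refine ⟨fun A B C hA hD => ?_, hne⟩
  obtain ⟨A', B', C', hE, hD', hlo, hhi, hAC⟩ := exists_properEquiv_reduced A B C hA (by omega)
  rcases reduced_of_discr_eq_neg_sixteen hlo hhi hAC (hD'.trans hD) with
    ⟨rfl, rfl, rfl⟩ | ⟨rfl, rfl, rfl⟩
  · exact Or.inl ⟨hE, fun h => hne (hE.symm.trans h)⟩
  · exact Or.inr ⟨hE, fun h => hne (h.symm.trans hE)⟩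
end
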